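/- arXiv:1104.0547 — 2 statements merged into one kernel-verified Lean document; each statement's English description precedes it below -/
import Mathlib

section
/- The function μ ↦ log μ − ψ(μ) is strictly decreasing on (0, ∞), where ψ is the digamma function; moreover log μ − ψ(μ) → ∞ as μ → 0⁺ and log μ − ψ(μ) → 0 as μ → ∞. -/
open Real Filter

/-- The digamma function `ψ = Γ'/Γ`. -/
noncomputable def digamma (x : ℝ) : ℝ := deriv Real.Gamma x / Real.Gamma x

/-!
Since `ψ = (log Γ)'` and `log Γ` is convex with `log Γ (x + 1) - log Γ x = log x`, comparing this
slope with the derivatives at `x` and `x + 1` gives `0 ≤ log x - ψ x ≤ 1 / x`, hence the limit at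
`∞`. The recurrence `ψ (x + 1) = ψ x + 1 / x` then telescopes to
`log x - ψ x = ∑ₖ g (x + k)` with `g t = 1 / t - log (1 + 1 / t)`, a nonnegative, strictly decreasing
function: this gives the strict monotonicity, and the lower bound `g x → ∞` as `x → 0⁺`.
-/

open Set Topology

lemma log_Gamma_add_one {x : ℝ} (hx : 0 < x) :
    log (Gamma (x + 1)) = log x + log (Gamma x) := by
  rw [Gamma_add_one hx.ne', log_mul hx.ne' (Gamma_pos_of_pos hx).ne']

lemma slope_log_Gamma_add_one {x : ℝ} (hx : 0 < x) :
    slope (log ∘ Gamma) x (x + 1) = log x := by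
  simp [slope_def_field, log_Gamma_add_one hx]

lemma hasDerivAt_log_Gamma {x : ℝ} (hx : 0 < x) :
    HasDerivAt (log ∘ Gamma) (digamma x) x := by
  have hx' : ∀ m : ℕ, x ≠ -m := fun m => by linarith [(Nat.cast_nonneg m : (0 : ℝ) ≤ m)]
  simpa [digamma, div_eq_inv_mul, Function.comp_def] using
    (differentiableAt_Gamma hx').hasDerivAt.log (Gamma_pos_of_pos hx).ne'

lemma digamma_add_one {x : ℝ} (hx : 0 < x) : digamma (x + 1) = digamma x + x⁻¹ := by
  have hshift : HasDerivAt (fun t => log (Gamma (t + 1))) (digamma (x + 1)) x :=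
    (hasDerivAt_log_Gamma (by linarith)).comp_add_const x 1
  have hsplit : HasDerivAt (fun t => log (Gamma (t + 1))) (x⁻¹ + digamma x) x := by
    refine ((hasDerivAt_log hx.ne').add (hasDerivAt_log_Gamma hx)).congr_of_eventuallyEq ?_
    filter_upwards [eventually_gt_nhds hx] with t ht using log_Gamma_add_one ht
  rw [hshift.unique hsplit, add_comm]

lemma digamma_le_log {x : ℝ} (hx : 0 < x) : digamma x ≤ log x :=
  slope_log_Gamma_add_one hx ▸ convexOn_log_Gamma.le_slope_of_hasDerivAt hx
    (by simp only [mem_Ioi]; linarith) (lt_add_one x) (hasDerivAt_log_Gamma hx)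

lemma log_le_digamma_add_one {x : ℝ} (hx : 0 < x) : log x ≤ digamma (x + 1) :=
  slope_log_Gamma_add_one hx ▸ convexOn_log_Gamma.slope_le_of_hasDerivAt hx
    (by simp only [mem_Ioi]; linarith) (lt_add_one x) (hasDerivAt_log_Gamma (by linarith))

lemma log_sub_digamma_nonneg {x : ℝ} (hx : 0 < x) : 0 ≤ log x - digamma x := by
  linarith [digamma_le_log hx]

lemma log_sub_digamma_le_inv {x : ℝ} (hx : 0 < x) : log x - digamma x ≤ x⁻¹ := by
  linarith [log_le_digamma_add_one hx, digamma_add_one hx]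

lemma tendsto_log_sub_digamma_atTop :
    Tendsto (fun x : ℝ => log x - digamma x) atTop (𝓝 0) :=
  tendsto_of_tendsto_of_tendsto_of_le_of_le' tendsto_const_nhds tendsto_inv_atTop_zero
    (eventually_gt_atTop 0 |>.mono fun _ => log_sub_digamma_nonneg)
    (eventually_gt_atTop 0 |>.mono fun _ => log_sub_digamma_le_inv)

lemma log_sub_digamma_sub_add_one {x : ℝ} (hx : 0 < x) :
    (log x - digamma x) - (log (x + 1) - digamma (x + 1)) = x⁻¹ - (log (x + 1) - log x) := by
  rw [digamma_add_one hx]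
  ring

lemma log_add_one_sub_log_le_inv {x : ℝ} (hx : 0 < x) : log (x + 1) - log x ≤ x⁻¹ := by
  have h := log_le_sub_one_of_pos (by positivity : 0 < (x + 1) / x)
  rwa [log_div (by linarith) hx.ne', add_div, div_self hx.ne', one_div, add_sub_cancel_left] at h

lemma strictAntiOn_inv_sub_log_add_one_sub_log :
    StrictAntiOn (fun x : ℝ => x⁻¹ - (log (x + 1) - log x)) (Ioi 0) := by
  intro a (ha : 0 < a) b (hb : 0 < b) hab
  set r := b * (a + 1) / (a * (b + 1))
  have hlog : log r = (log b - log a) - (log (b + 1) - log (a + 1)) := by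
    rw [log_div (by positivity) (by positivity), log_mul hb.ne' (by positivity),
      log_mul ha.ne' (by positivity)]
    ring
  have hr : log r < r - 1 :=
    log_lt_sub_one_of_pos (by positivity) (by rw [Ne, div_eq_one_iff_eq (by positivity)]; nlinarith)
  have hr' : r - 1 < a⁻¹ - b⁻¹ := by
    rw [div_sub_one (by positivity), inv_sub_inv ha.ne' hb.ne',
      div_lt_div_iff₀ (by positivity) (by positivity)]
    nlinarith [mul_pos ha hb, mul_pos (mul_pos ha hb) (sub_pos.2 hab)]
  dsimp only
  linarith

lemma hasSum_log_sub_digamma {x : ℝ} (hx : 0 < x) :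
    HasSum (fun k : ℕ => (x + k)⁻¹ - (log (x + k + 1) - log (x + k))) (log x - digamma x) := by
  have hxk : ∀ k : ℕ, 0 < x + k := fun k => by positivity
  rw [hasSum_iff_tendsto_nat_of_nonneg
    (fun k => sub_nonneg.2 (log_add_one_sub_log_le_inv (hxk k)))]
  have hpartial : ∀ n : ℕ, ∑ k ∈ Finset.range n, ((x + k)⁻¹ - (log (x + k + 1) - log (x + k)))
      = (log x - digamma x) - (log (x + n) - digamma (x + n)) := by
    intro n
    have := Finset.sum_range_sub' (fun k : ℕ => log (x + k) - digamma (x + k)) n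
    simp only [Nat.cast_zero, add_zero, Nat.cast_succ, ← add_assoc] at this
    rw [← this]
    exact Finset.sum_congr rfl fun k _ => (log_sub_digamma_sub_add_one (hxk k)).symm
  simp_rw [hpartial]
  simpa using tendsto_const_nhds.sub <| tendsto_log_sub_digamma_atTop.comp <|
    tendsto_atTop_add_const_left _ x tendsto_natCast_atTop_atTop

lemma tendsto_inv_sub_log_add_one_sub_log_nhdsGT_zero :
    Tendsto (fun x : ℝ => x⁻¹ - (log (x + 1) - log x)) (𝓝[>] 0) atTop := by
  -- The function is `x⁻¹ * (1 - x * log (x + 1) + x * log x)`, and `x * log x → 0`.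
  have hcont : ContinuousAt (fun x : ℝ => 1 - x * log (x + 1) + x * log x) 0 := by
    have := continuous_mul_log.continuousAt (x := 0)
    fun_prop (disch := norm_num)
  have hlim : Tendsto (fun x : ℝ => 1 - x * log (x + 1) + x * log x) (𝓝[>] 0) (𝓝 1) := by
    simpa using hcont.tendsto.mono_left nhdsWithin_le_nhds
  refine (hlim.pos_mul_atTop one_pos tendsto_inv_nhdsGT_zero).congr' ?_
  filter_upwards [self_mem_nhdsWithin] with x (hx : 0 < x)
  field_simp
  ring

/-- The function `μ ↦ log μ − ψ(μ)` is strictly decreasing on `(0, ∞)`,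
tends to `∞` as `μ → 0⁺`, and tends to `0` as `μ → ∞`. -/
theorem log_sub_digamma_strictAnti :
    StrictAntiOn (fun x : ℝ => Real.log x - digamma x) (Set.Ioi 0)
    ∧ Tendsto (fun x : ℝ => Real.log x - digamma x) (nhdsWithin 0 (Set.Ioi 0)) atTop
    ∧ Tendsto (fun x : ℝ => Real.log x - digamma x) atTop (nhds 0) := by
  refine ⟨?_, ?_, tendsto_log_sub_digamma_atTop⟩
  · intro a (ha : 0 < a) b (hb : 0 < b) hab
    have hterm : ∀ k : ℕ, (b + k)⁻¹ - (log (b + k + 1) - log (b + k))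
        < (a + k)⁻¹ - (log (a + k + 1) - log (a + k)) := fun k =>
      strictAntiOn_inv_sub_log_add_one_sub_log (show 0 < a + k by positivity)
        (show 0 < b + k by positivity) (by linarith)
    exact hasSum_lt (fun k => (hterm k).le) (hterm 0) (hasSum_log_sub_digamma hb)
      (hasSum_log_sub_digamma ha)
  · refine tendsto_atTop_mono' _ ?_ tendsto_inv_sub_log_add_one_sub_log_nhdsGT_zero
    filter_upwards [self_mem_nhdsWithin] with x (hx : 0 < x)
    linarith [log_sub_digamma_sub_add_one hx, log_sub_digamma_nonneg (by linarith : 0 < x + 1)]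
end

section
/- For the binary multiplicative block channel with block length K ≥ 1, state probability r = Pr[S=1] ∈ (0, 1/2), and input distribution assigning probability 1−p to the all-zero block and p/(2^K − 1) to each nonzero block, the mutual information per channel use equals (1/K)·[H₂(pr) + p·(r·log(2^K − 1) − H₂(r))], where H₂ is the binary entropy function. -/
/-!
Each term of the mutual information factors as `P x · W(y|x) · log (W(y|x) / P_Y y)`. The output
is the zero block with probability `1 - p r` and any other block `y` with probability `r · P y`,
so the input `0` contributes `-log (1 - p r)` and every other input `x` contributes
`r · log (1 / P x) + (1 - r) · log ((1 - r) / (1 - p r))`. For the uniform choice `P x = p / N`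
these sum to the binary-entropy expression.
-/

open Finset

/-- The binary entropy function (natural logarithm). -/
noncomputable def binEnt (q : ℝ) : ℝ := -q * Real.log q - (1 - q) * Real.log (1 - q)

open Real

lemma mul_mul_log_mul_div_mul_left (a b c : ℝ) :
    a * c * log (a * c / (a * b)) = a * c * log (c / b) := by
  rcases eq_or_ne a 0 with rfl | ha
  · simp
  · rw [mul_div_mul_left c b ha]

lemma mul_log_div_mul_self (a b : ℝ) : a * log (a / (a * b)) = -(a * log b) := by
  simpa [log_inv] using mul_mul_log_mul_div_mul_left a b 1

section MultChannel

variable {α : Type*} [DecidableEq α] (z : α) (r : ℝ)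

/-- The transition matrix of the channel that passes its input `x` with probability `r` and
outputs `z` otherwise; for blocks with `z = 0` this is `y = s · x`. -/
def multChannel (x y : α) : ℝ :=
  r * (if y = x then 1 else 0) + (1 - r) * (if y = z then 1 else 0)

lemma multChannel_zero_left (y : α) :
    multChannel z r z y = if y = z then 1 else 0 := by
  unfold multChannel; split_ifs <;> ring

variable [Fintype α]

lemma sum_mul_multChannel_zero (P : α → ℝ) :
    ∑ x, P x * multChannel z r x z = (1 - r) * ∑ x, P x + r * P z := by
  simp only [multChannel, mul_ite, mul_one, mul_zero, ↓reduceIte, mul_add, sum_add_distrib,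
    sum_ite_eq, mem_univ, ← sum_mul]
  ring

lemma sum_mul_multChannel_of_ne (P : α → ℝ) {y : α} (hy : y ≠ z) :
    ∑ x, P x * multChannel z r x y = r * P y := by
  simp [multChannel, hy, mul_comm]

lemma sum_multChannel_zero_mul_log (Q : α → ℝ) :
    ∑ y, multChannel z r z y * log (multChannel z r z y / Q y) = -log (Q z) := by
  simp [multChannel_zero_left]

lemma sum_multChannel_mul_log_of_ne (Q : α → ℝ) {x : α} (hx : x ≠ z) :
    ∑ y, multChannel z r x y * log (multChannel z r x y / Q y)
      = r * log (r / Q x) + (1 - r) * log ((1 - r) / Q z) := by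
  have hW : ∀ y, multChannel z r x y
      = (if y = x then r else 0) + (if y = z then 1 - r else 0) := by
    intro y; simp only [multChannel, mul_ite, mul_one, mul_zero]
  rw [← sum_subset (subset_univ {x, z}), sum_pair hx, hW, hW]
  · simp [hx, hx.symm]
  · intro y _ hy
    simp only [mem_insert, mem_singleton, not_or] at hy
    simp [hW, hy.1, hy.2]

theorem multChannel_mutualInfo (P : α → ℝ) (hP : ∑ x, P x = 1) :
    ∑ x, ∑ y, P x * multChannel z r x y
        * log (P x * multChannel z r x y / (P x * ∑ x', P x' * multChannel z r x' y))
      = -(P z * log (1 - r * (1 - P z)))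
        + ∑ x ∈ univ.erase z,
            P x * (-(r * log (P x)) + (1 - r) * log ((1 - r) / (1 - r * (1 - P z)))) := by
  set Q : α → ℝ := fun y => ∑ x', P x' * multChannel z r x' y
  have hQz : Q z = 1 - r * (1 - P z) := by
    simp only [Q]; rw [sum_mul_multChannel_zero, hP]; ring
  have hQ_ne : ∀ x ≠ z, Q x = r * P x := fun x hx => sum_mul_multChannel_of_ne z r P hx
  calc ∑ x, ∑ y, P x * multChannel z r x y * log (P x * multChannel z r x y / (P x * Q y))
      = ∑ x, P x * ∑ y, multChannel z r x y * log (multChannel z r x y / Q y) := by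
        simp_rw [mul_mul_log_mul_div_mul_left, mul_sum, mul_assoc]
    _ = -(P z * log (Q z)) + ∑ x ∈ univ.erase z,
          P x * (r * log (r / Q x) + (1 - r) * log ((1 - r) / Q z)) := by
        rw [← add_sum_erase _ _ (mem_univ z), sum_multChannel_zero_mul_log, mul_neg]
        congr 1
        refine sum_congr rfl fun x hx => ?_
        rw [sum_multChannel_mul_log_of_ne z r Q (ne_of_mem_erase hx)]
    _ = _ := by
        rw [hQz]
        congr 1
        refine sum_congr rfl fun x hx => ?_
        rw [hQ_ne x (ne_of_mem_erase hx), mul_log_div_mul_self]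

theorem multChannel_mutualInfo_of_uniform_ne (p : ℝ) (hα : 1 < Fintype.card α) :
    let N : ℝ := Fintype.card α - 1
    let P : α → ℝ := fun x => if x = z then 1 - p else p / N
    ∑ x, ∑ y, P x * multChannel z r x y
        * log (P x * multChannel z r x y / (P x * ∑ x', P x' * multChannel z r x' y))
      = -((1 - p) * log (1 - r * p))
        + p * (-(r * log (p / N)) + (1 - r) * log ((1 - r) / (1 - r * p))) := by
  intro N P
  have hN : N ≠ 0 := by
    have : (1 : ℝ) < Fintype.card α := by exact_mod_cast hα
    simp only [N]; linarith
  have hcard : ((univ.erase z).card : ℝ) = N := by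
    rw [card_erase_of_mem (mem_univ z), card_univ, Nat.cast_pred (by omega)]
  have hPz : P z = 1 - p := if_pos rfl
  have hPne : ∀ x ∈ univ.erase z, P x = p / N := fun x hx => if_neg (ne_of_mem_erase hx)
  have hP : ∑ x, P x = 1 := by
    rw [← add_sum_erase _ _ (mem_univ z), hPz, sum_congr rfl hPne, sum_const, nsmul_eq_mul,
      hcard]
    field_simp; ring
  rw [multChannel_mutualInfo z r P hP, hPz, sum_congr rfl fun x hx => by rw [hPne x hx],
    sum_const, nsmul_eq_mul, hcard, sub_sub_cancel]
  field_simp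

end MultChannel

/-- For the binary multiplicative block channel `y = s·x` (componentwise, block
length `K`, state `s ∈ {0,1}` with `Pr[s = 1] = r`), under the input
distribution placing mass `1 − p` on the all-zero block and `p/(2^K − 1)` on
each nonzero block, the mutual information per channel use equals
`(1/K)·[H₂(pr) + p·(r·log(2^K − 1) − H₂(r))]`. -/
theorem binary_multiplicative_mutual_info
    (K : ℕ) (hK : 1 ≤ K) (r p : ℝ) (hr0 : 0 < r) (hr : r < 1 / 2)
    (hp0 : 0 < p) (hp1 : p ≤ 1)
    (Px : (Fin K → Bool) → ℝ)
    (hPx : Px = fun x => if x = (fun _ => false) then 1 - p else p / (2 ^ K - 1))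
    (Pxy : (Fin K → Bool) → (Fin K → Bool) → ℝ)
    (hPxy : Pxy = fun x y => Px x *
      (r * (if y = x then 1 else 0)
        + (1 - r) * (if y = (fun _ => false) then 1 else 0)))
    (Py : (Fin K → Bool) → ℝ) (hPy : Py = fun y => ∑ x, Pxy x y) :
    (1 / (K : ℝ)) * (∑ x, ∑ y, Pxy x y * Real.log (Pxy x y / (Px x * Py y)))
      = (1 / (K : ℝ)) * (binEnt (p * r)
          + p * (r * Real.log ((2 : ℝ) ^ K - 1) - binEnt r)) := by
  have hcard : (Fintype.card (Fin K → Bool) : ℝ) - 1 = 2 ^ K - 1 := by simp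
  have hcard_gt : 1 < Fintype.card (Fin K → Bool) := by
    rw [Fintype.card_fun, Fintype.card_bool, Fintype.card_fin]; exact Nat.one_lt_two_pow (by omega)
  have hN : (2 : ℝ) ^ K - 1 ≠ 0 := by
    have : (1 : ℝ) < 2 ^ K := one_lt_pow₀ one_lt_two (by omega)
    linarith
  have hpr : p * r < 1 := by nlinarith
  have hchannel : Pxy = fun x y => Px x * multChannel (fun _ => false) r x y := hPxy
  rw [← hcard] at hPx
  subst hPy hchannel hPx
  rw [multChannel_mutualInfo_of_uniform_ne _ r p hcard_gt, hcard, mul_comm r p]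
  congr 1
  rw [log_div hp0.ne' hN, log_div (by linarith) (by linarith), binEnt, binEnt,
    log_mul hp0.ne' hr0.ne']
  ring
end
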